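/- Let $u_0:\mathbb{R}\to\mathbb{R}$ be steeper than each of finitely many functions $p_0>p_1>\dots>p_N$ (continuous, with $p_0=p$, $p_N=0$) and steeper (up to time shifts) than each of finitely many continuous functions $U_k(t,x)$ ($1\le k\le N$) satisfying: for every $x_1\in\mathbb{R}$ and every $\alpha$ with $p_k(x_1)<\alpha<p_{k-1}(x_1)$ there exists $t$ with $U_k(t,x_1)=\alpha$, and $p_k(x)\le U_k(t,x)\le p_{k-1}(x)$ for all $(t,x)$. Let $v(t,x)$ be any function with $0\leq v\leq p$ such that every $p_k$ and every $U_k$ is steeper than $v$ (up to time shifts). Then $u_0$ is steeper than $v$ (up to time shifts). -/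
import Mathlib


/-- `u1` is steeper than `u2` up to time shifts (Definition 1.2). -/
def SteeperTW (u1 u2 : ℝ → ℝ → ℝ) : Prop :=
  ∀ t1 t2 x1, u1 t1 x1 = u2 t2 x1 →
    (∀ x, x ≤ x1 → u2 t2 x ≤ u1 t1 x) ∧ (∀ x, x1 ≤ x → u1 t1 x ≤ u2 t2 x)

/-- A time-independent function regarded as a function of `(t, x)`. -/
def toTW (f : ℝ → ℝ) : ℝ → ℝ → ℝ := fun _ x => f x

/-- If `u0` is steeper than every platform `p k` and every front `U k` of a terrace whose
components' values cover the whole range `[0, p]`, then `u0` is steeper than every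
function `v` with `0 ≤ v ≤ p` which all the platforms and fronts are steeper than. -/
theorem steeper_than_terrace_implies_steeper
    (N : ℕ) (hN : 1 ≤ N) (p : ℕ → ℝ → ℝ) (P : ℝ → ℝ)
    (hpc : ∀ k ≤ N, Continuous (p k))
    (hp0 : p 0 = P) (hpN : p N = fun _ => (0 : ℝ))
    (hdec : ∀ k < N, ∀ x, p (k + 1) x < p k x)
    (U : ℕ → ℝ → ℝ → ℝ)
    (hUc : ∀ k, 1 ≤ k → k ≤ N → Continuous (Function.uncurry (U k)))
    (hUrange : ∀ k, 1 ≤ k → k ≤ N → ∀ x1 α,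
      p k x1 < α → α < p (k - 1) x1 → ∃ t, U k t x1 = α)
    (hUbetween : ∀ k, 1 ≤ k → k ≤ N → ∀ t x, p k x ≤ U k t x ∧ U k t x ≤ p (k - 1) x)
    (u0 : ℝ → ℝ)
    (hu0p : ∀ k ≤ N, SteeperTW (toTW u0) (toTW (p k)))
    (hu0U : ∀ k, 1 ≤ k → k ≤ N → SteeperTW (toTW u0) (U k))
    (v : ℝ → ℝ → ℝ)
    (hv0 : ∀ t x, 0 ≤ v t x ∧ v t x ≤ P x)
    (hpv : ∀ k ≤ N, SteeperTW (toTW (p k)) v)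
    (hUv : ∀ k, 1 ≤ k → k ≤ N → SteeperTW (U k) v) :
    SteeperTW (toTW u0) v := by

  intro t1 t2 x1 h
  classical
  set α := v t2 x1 with hα
  by_cases hex : ∃ k ≤ N, p k x1 = α
  · obtain ⟨k, hk, hkα⟩ := hex
    have H1 := hu0p k hk t1 0 x1 (by simpa [toTW] using h.trans hkα.symm)
    have H2 := hpv k hk 0 t2 x1 (by simpa [toTW] using hkα)
    exact ⟨fun x hx => le_trans (H2.1 x hx) (H1.1 x hx),
           fun x hx => le_trans (H1.2 x hx) (H2.2 x hx)⟩
  · push_neg at hex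
    have hαub : α ≤ p 0 x1 := by rw [hp0]; exact (hv0 t2 x1).2
    have hαlb : p N x1 ≤ α := by rw [hpN]; exact (hv0 t2 x1).1
    have hexN : ∃ k, p k x1 < α :=
      ⟨N, lt_of_le_of_ne hαlb (hex N le_rfl)⟩
    set k := Nat.find hexN with hkdef
    have hkα : p k x1 < α := Nat.find_spec hexN
    have hk1 : 1 ≤ k := by
      by_contra hc
      have : k = 0 := by omega
      have h0 : p 0 x1 < α := this ▸ hkα
      exact absurd hαub (not_le_of_gt h0)
    have hkN : k ≤ N := by
      by_contra hc
      push_neg at hc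
      exact Nat.find_min hexN hc (lt_of_le_of_ne hαlb (hex N le_rfl))
    have hprev : ¬ p (k - 1) x1 < α := Nat.find_min hexN (by omega)
    have hprevne : p (k - 1) x1 ≠ α := hex (k - 1) (by omega)
    have hprevgt : α < p (k - 1) x1 := lt_of_le_of_ne (not_lt.1 hprev) (Ne.symm hprevne)
    obtain ⟨t, ht⟩ := hUrange k hk1 hkN x1 α hkα hprevgt
    have H1 := hu0U k hk1 hkN t1 t x1 (by simpa [toTW] using h.trans ht.symm)
    have H2 := hUv k hk1 hkN t t2 x1 (by simpa using ht)
    exact ⟨fun x hx => le_trans (H2.1 x hx) (H1.1 x hx),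
           fun x hx => le_trans (H1.2 x hx) (H2.2 x hx)⟩
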